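/- arXiv:1008.2471 — 2 statements merged into one kernel-verified Lean document; each statement's English description precedes it below -/
import Mathlib

section
/- (Key step of the linear-independence lemma: a collinear direction gives no progress.) Fix a nonzero vector a₁ ∈ ℝ^d and let g^{(1)}(x) = g(x)·f_{a₁}(⟨a₁,x⟩)/g_{a₁}(⟨a₁,x⟩). Let a₂ = α·a₁ with α ≠ 0. Then the a₂-marginal density of g^{(1)} equals f_{a₂} almost everywhere, and therefore the next update g^{(2)}(x) := g^{(1)}(x)·f_{a₂}(⟨a₂,x⟩)/[g^{(1)}]_{a₂}(⟨a₂,x⟩) equals g^{(1)}(x) for almost every x. In particular, if K(g^{(2)}, f) = 0 then already K(g^{(1)}, f) = 0. -/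
open MeasureTheory Real Filter
open scoped ENNReal Topology RealInnerProductSpace

noncomputable section

/-- Euclidean space `ℝ^d`. -/
abbrev Euc (d : ℕ) := EuclideanSpace ℝ (Fin d)

/-- The measure on `α` with Lebesgue density `p`. -/
def densMeasure {α : Type*} [MeasureSpace α] (p : α → ℝ) : Measure α :=
  MeasureTheory.volume.withDensity (fun x => ENNReal.ofReal (p x))

/-- `pa` is the Lebesgue density of the pushforward of the measure `p ⬝ Leb`
under the projection `x ↦ ⟪a, x⟫`. -/
def IsMarg {d : ℕ} (p : Euc d → ℝ) (a : Euc d) (pa : ℝ → ℝ) : Prop :=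
  Measure.map (fun x => (⟪a, x⟫ : ℝ)) (densMeasure p) = densMeasure pa

/- Kullback–Leibler divergence between densities: `∫ p log (p/q)` if
`p ⬝ Leb ≪ q ⬝ Leb`, and `+∞` otherwise. -/
open Classical in
def KLD {α : Type*} [MeasureSpace α] (p q : α → ℝ) : EReal :=
  if densMeasure p ≪ densMeasure q
  then ((∫ x, p x * Real.log (p x / q x) : ℝ) : EReal)
  else ⊤

/-!
Multiplying `g` by `(f_{a₁}/g_{a₁})(⟪a₁, ·⟫)` replaces its `a₁`-marginal by `f_{a₁}`; the ratio
is harmless where `g_{a₁}` vanishes because `f ⬝ Leb ≪ g ⬝ Leb` forces `f_{a₁}` to vanish there too.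
Since `⟪α • a₁, x⟫ = α ⟪a₁, x⟫`, every `a₂`-marginal is the image of the `a₁`-marginal under
`t ↦ α t`, so `g⁽¹⁾` and `f` have the same `a₂`-marginal. The second correction factor is then `1`
wherever `g⁽¹⁾` carries mass, so `g⁽²⁾ = g⁽¹⁾` a.e., and `KLD` does not see null sets.
-/

theorem MeasureTheory.Measure.map_withDensity_comp {X Y : Type*} [MeasurableSpace X]
    [MeasurableSpace Y] (μ : Measure X) {T : X → Y} (hT : Measurable T) {h : Y → ℝ≥0∞}
    (hh : Measurable h) :
    (μ.withDensity (h ∘ T)).map T = (μ.map T).withDensity h := by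
  ext s hs
  rw [Measure.map_apply hT hs, withDensity_apply _ (hT hs), withDensity_apply _ hs,
    setLIntegral_map hs hh hT]
  rfl

section densMeasure

variable {α : Type*} [MeasureSpace α] {p q : α → ℝ}

theorem densMeasure_apply_eq_zero_iff (hp : Measurable p) (s : Set α) :
    densMeasure p s = 0 ↔ volume ({x | 0 < p x} ∩ s) = 0 := by
  simp only [densMeasure, withDensity_apply_eq_zero' hp.ennreal_ofReal.aemeasurable, ne_eq,
    ENNReal.ofReal_eq_zero, not_le]

theorem densMeasure_setOf_nonpos (hp : Measurable p) : densMeasure p {x | p x ≤ 0} = 0 := by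
  rw [densMeasure_apply_eq_zero_iff hp]
  convert measure_empty (μ := (volume : Measure α))
  ext x
  simp

theorem ae_nonpos_of_densMeasure_eq_zero (hp : Measurable p) {s : Set α}
    (hs : densMeasure p s = 0) : ∀ᵐ x, x ∈ s → p x ≤ 0 := by
  rw [densMeasure_apply_eq_zero_iff hp, measure_eq_zero_iff_ae_notMem] at hs
  filter_upwards [hs] with x hx hxs
  simpa [hxs] using hx

theorem volume_absolutelyContinuous_densMeasure (hp : Measurable p) (hpos : ∀ x, 0 < p x) :
    (volume : Measure α) ≪ densMeasure p := fun s hs => by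
  simpa [hpos] using (densMeasure_apply_eq_zero_iff hp s).mp hs

theorem ae_eq_of_densMeasure_eq [SigmaFinite (volume : Measure α)] (hp : Measurable p)
    (hq : Measurable q) (hp0 : ∀ x, 0 ≤ p x) (hq0 : ∀ x, 0 ≤ q x)
    (h : densMeasure p = densMeasure q) : p =ᵐ[volume] q := by
  filter_upwards [(withDensity_eq_iff_of_sigmaFinite hp.ennreal_ofReal.aemeasurable
    hq.ennreal_ofReal.aemeasurable).mp h] with x hx
  exact (ENNReal.ofReal_eq_ofReal_iff (hp0 x) (hq0 x)).mp hx

theorem KLD_congr_ae_left {p' : α → ℝ} (h : p =ᵐ[volume] p') (q : α → ℝ) :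
    KLD p q = KLD p' q := by
  have hdens : densMeasure p = densMeasure p' :=
    withDensity_congr_ae (h.mono fun x hx => by simp only [hx])
  have hint : ∫ x, p x * Real.log (p x / q x) = ∫ x, p' x * Real.log (p' x / q x) :=
    integral_congr_ae (h.mono fun x hx => by simp only [hx])
  rw [KLD, KLD, hdens, hint]

end densMeasure

section IsMarg

variable {d : ℕ} {p q : Euc d → ℝ} {a : Euc d} {r s : ℝ → ℝ}

theorem measurable_inner_left (a : Euc d) : Measurable fun x : Euc d => ⟪a, x⟫ :=
  (continuous_const.inner continuous_id).measurable

theorem map_inner_smul (μ : Measure (Euc d)) (a : Euc d) (c : ℝ) :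
    μ.map (fun x => ⟪c • a, x⟫) = (μ.map fun x => ⟪a, x⟫).map (c * ·) := by
  rw [Measure.map_map (measurable_const_mul c) (measurable_inner_left a)]
  congr 1
  funext x
  simp [real_inner_smul_left]

theorem IsMarg.map_inner_smul_eq (hp : IsMarg p a r) (hq : IsMarg q a r) (c : ℝ) :
    (densMeasure p).map (fun x => ⟪c • a, x⟫) = (densMeasure q).map (fun x => ⟪c • a, x⟫) := by
  rw [map_inner_smul, map_inner_smul, hp, hq]

theorem IsMarg.congr_ae (hp : IsMarg p a r) (hrs : r =ᵐ[volume] s) : IsMarg p a s :=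
  hp.trans (withDensity_congr_ae (hrs.mono fun t ht => by simp only [ht]))

theorem IsMarg.absolutelyContinuous (hp : IsMarg p a r) (hq : IsMarg q a s)
    (hpq : densMeasure p ≪ densMeasure q) : densMeasure r ≪ densMeasure s := by
  rw [← hp, ← hq]
  exact hpq.map (measurable_inner_left a)

theorem IsMarg.mul_comp (hp : IsMarg p a r) (hpm : Measurable p) (hp0 : ∀ x, 0 ≤ p x)
    (hrm : Measurable r) (hr0 : ∀ t, 0 ≤ r t) {h : ℝ → ℝ} (hh : Measurable h) :
    IsMarg (fun x => p x * h ⟪a, x⟫) a (fun t => r t * h t) := by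
  have hdens : densMeasure (fun x => p x * h ⟪a, x⟫)
      = (densMeasure p).withDensity ((fun t => ENNReal.ofReal (h t)) ∘ fun x => ⟪a, x⟫) := by
    rw [densMeasure, densMeasure, ← withDensity_mul _ hpm.ennreal_ofReal
      (hh.ennreal_ofReal.comp (measurable_inner_left a))]
    simp only [Function.comp_def, ENNReal.ofReal_mul (hp0 _)]
    rfl
  rw [IsMarg, hdens, Measure.map_withDensity_comp _ (measurable_inner_left a)
    hh.ennreal_ofReal, hp, densMeasure, densMeasure,
    ← withDensity_mul _ hrm.ennreal_ofReal hh.ennreal_ofReal]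
  simp only [ENNReal.ofReal_mul (hr0 _)]
  rfl

theorem IsMarg.mul_div_comp (hq : IsMarg q a s) (hp : IsMarg p a r)
    (hqp : densMeasure q ≪ densMeasure p) (hpm : Measurable p) (hrm : Measurable r)
    (hsm : Measurable s) (hp0 : ∀ x, 0 ≤ p x) (hr0 : ∀ t, 0 ≤ r t) (hs0 : ∀ t, 0 ≤ s t) :
    IsMarg (fun x => p x * s ⟪a, x⟫ / r ⟪a, x⟫) a s := by
  have hsr : ∀ᵐ t, r t ≤ 0 → s t ≤ 0 :=
    ae_nonpos_of_densMeasure_eq_zero hsm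
      (hq.absolutelyContinuous hp hqp (densMeasure_setOf_nonpos hrm))
  simp_rw [mul_div_assoc]
  refine (hp.mul_comp hpm hp0 hrm hr0 (hsm.div hrm)).congr_ae ?_
  filter_upwards [hsr] with t ht
  rcases (hr0 t).eq_or_lt with h0 | hpos
  · simp [← h0, le_antisymm (ht h0.ge) (hs0 t)]
  · exact mul_div_cancel₀ _ hpos.ne'

theorem IsMarg.ae_mul_div_eq (hp : IsMarg p a r) (hpm : Measurable p) (hp0 : ∀ x, 0 ≤ p x)
    (hrm : Measurable r) (hsm : Measurable s) (hrs : r =ᵐ[volume] s) :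
    ∀ᵐ x, p x * s ⟪a, x⟫ / r ⟪a, x⟫ = p x := by
  set B := {t | r t ≠ s t ∨ r t ≤ 0}
  have hBm : MeasurableSet B :=
    (measurableSet_eq_fun hrm hsm).compl.union (measurableSet_le hrm measurable_const)
  have hB : densMeasure r B = 0 := by
    rw [densMeasure_apply_eq_zero_iff hrm]
    refine measure_mono_null (fun t ⟨hpos, ht⟩ => ?_) (ae_iff.mp hrs)
    exact ht.resolve_right (not_le.mpr hpos)
  have hpB : ∀ᵐ x, ⟪a, x⟫ ∈ B → p x ≤ 0 := by
    refine ae_nonpos_of_densMeasure_eq_zero hpm (s := (fun x => ⟪a, x⟫) ⁻¹' B) ?_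
    rwa [← Measure.map_apply (measurable_inner_left a) hBm, hp]
  filter_upwards [hpB] with x hx
  by_cases hxB : ⟪a, x⟫ ∈ B
  · simp [le_antisymm (hx hxB) (hp0 x)]
  · obtain ⟨heq, hpos⟩ : r ⟪a, x⟫ = s ⟪a, x⟫ ∧ 0 < r ⟪a, x⟫ := by simpa [B] using hxB
    rw [← heq, mul_div_assoc, div_self hpos.ne', mul_one]

end IsMarg

theorem statement10_general (d : ℕ) (f g : Euc d → ℝ)
    (hgm : Measurable g) (hgpos : ∀ x, 0 < g x)
    (a₁ : Euc d) (α : ℝ)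
    (a₂ : Euc d) (ha₂ : a₂ = α • a₁)
    (fa1 ga1 fa2 : ℝ → ℝ)
    (hfa1m : Measurable fa1) (hga1m : Measurable ga1) (hfa2m : Measurable fa2)
    (hfa1nn : ∀ t, 0 ≤ fa1 t) (hga1nn : ∀ t, 0 ≤ ga1 t) (hfa2nn : ∀ t, 0 ≤ fa2 t)
    (hfa1 : IsMarg f a₁ fa1) (hga1 : IsMarg g a₁ ga1) (hfa2 : IsMarg f a₂ fa2)
    (g1 : Euc d → ℝ) (hg1 : g1 = fun x => g x * fa1 ⟪a₁, x⟫ / ga1 ⟪a₁, x⟫)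
    (g1a2 : ℝ → ℝ) (hg1a2m : Measurable g1a2) (hg1a2nn : ∀ t, 0 ≤ g1a2 t)
    (hg1a2 : IsMarg g1 a₂ g1a2)
    (g2 : Euc d → ℝ) (hg2 : g2 = fun x => g1 x * fa2 ⟪a₂, x⟫ / g1a2 ⟪a₂, x⟫) :
    (∀ᵐ s ∂(MeasureTheory.volume : Measure ℝ), g1a2 s = fa2 s) ∧
    (∀ᵐ x ∂(MeasureTheory.volume : Measure (Euc d)), g2 x = g1 x) ∧
    (KLD g2 f = 0 → KLD g1 f = 0) := by
  have hg1m : Measurable g1 := by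
    subst hg1
    exact (hgm.mul (hfa1m.comp (measurable_inner_left a₁))).div
      (hga1m.comp (measurable_inner_left a₁))
  have hg1nn : ∀ x, 0 ≤ g1 x := fun x => by
    subst hg1
    exact div_nonneg (mul_nonneg (hgpos x).le (hfa1nn _)) (hga1nn _)
  have hfg : densMeasure f ≪ densMeasure g :=
    (withDensity_absolutelyContinuous _ _).trans
      (volume_absolutelyContinuous_densMeasure hgm hgpos)
  have hg1a1 : IsMarg g1 a₁ fa1 :=
    hg1 ▸ hfa1.mul_div_comp hga1 hfg hgm hga1m hfa1m (fun x => (hgpos x).le) hga1nn hfa1nn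
  have hg1a2_eq : g1a2 =ᵐ[volume] fa2 := by
    refine ae_eq_of_densMeasure_eq hg1a2m hfa2m hg1a2nn hfa2nn ?_
    rw [← hg1a2, ← hfa2, ha₂]
    exact hg1a1.map_inner_smul_eq hfa1 α
  have hg2_eq : g2 =ᵐ[volume] g1 :=
    hg2 ▸ hg1a2.ae_mul_div_eq hg1m hg1nn hg1a2m hfa2m hg1a2_eq
  exact ⟨hg1a2_eq, hg2_eq, fun h => KLD_congr_ae_left hg2_eq f ▸ h⟩

/-- key step of the linear-independence lemma: if `a₂ = α·a₁` with
`α ≠ 0`, then the `a₂`-marginal of `g⁽¹⁾ = g·(f_{a₁}/g_{a₁})(⟪a₁,·⟫)` equals `f_{a₂}`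
a.e., the next update `g⁽²⁾ = g⁽¹⁾·(f_{a₂}/[g⁽¹⁾]_{a₂})(⟪a₂,·⟫)` equals `g⁽¹⁾` a.e.,
and `K(g⁽²⁾, f) = 0 → K(g⁽¹⁾, f) = 0`. -/
theorem statement10 (d : ℕ) (hd : 1 ≤ d) (f g : Euc d → ℝ)
    (hfm : Measurable f) (hgm : Measurable g)
    (hfpos : ∀ x, 0 < f x) (hgpos : ∀ x, 0 < g x)
    (hfint : ∫ x, f x = 1) (hgint : ∫ x, g x = 1)
    (a₁ : Euc d) (ha₁ : a₁ ≠ 0) (α : ℝ) (hα : α ≠ 0)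
    (a₂ : Euc d) (ha₂ : a₂ = α • a₁)
    (fa1 ga1 fa2 : ℝ → ℝ)
    (hfa1m : Measurable fa1) (hga1m : Measurable ga1) (hfa2m : Measurable fa2)
    (hfa1nn : ∀ t, 0 ≤ fa1 t) (hga1nn : ∀ t, 0 ≤ ga1 t) (hfa2nn : ∀ t, 0 ≤ fa2 t)
    (hfa1 : IsMarg f a₁ fa1) (hga1 : IsMarg g a₁ ga1) (hfa2 : IsMarg f a₂ fa2)
    (g1 : Euc d → ℝ) (hg1 : g1 = fun x => g x * fa1 ⟪a₁, x⟫ / ga1 ⟪a₁, x⟫)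
    (g1a2 : ℝ → ℝ) (hg1a2m : Measurable g1a2) (hg1a2nn : ∀ t, 0 ≤ g1a2 t)
    (hg1a2 : IsMarg g1 a₂ g1a2)
    (g2 : Euc d → ℝ) (hg2 : g2 = fun x => g1 x * fa2 ⟪a₂, x⟫ / g1a2 ⟪a₂, x⟫) :
    (∀ᵐ s ∂(MeasureTheory.volume : Measure ℝ), g1a2 s = fa2 s) ∧
    (∀ᵐ x ∂(MeasureTheory.volume : Measure (Euc d)), g2 x = g1 x) ∧
    (KLD g2 f = 0 → KLD g1 f = 0) :=
  statement10_general d f g hgm hgpos a₁ α a₂ ha₂ fa1 ga1 fa2 hfa1m hga1m hfa2m hfa1nn hga1nn hfa2nn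
    hfa1 hga1 hfa2 g1 hg1 g1a2 hg1a2m hg1a2nn hg1a2 g2 hg2
end
end

section
/- (Key inequality in the verification of hypothesis (H'3).) Suppose that f(x)·g_{a₁}(⟨a₁,x⟩) = g(x)·f_{a₁}(⟨a₁,x⟩) for almost every x ∈ ℝ^d (equality of the conditional densities of f and g given ⟨a₁,x⟩). Then for every nonzero c ∈ ℝ^d, whenever the integral is defined, ∫_{ℝ^d} ln( (g(x)·f_c(⟨c,x⟩)) / (g_c(⟨c,x⟩)·f(x)) ) · ( f_{a₁}(⟨a₁,x⟩)/g_{a₁}(⟨a₁,x⟩) − f_c(⟨c,x⟩)/g_c(⟨c,x⟩) ) · g(x) dx ≤ 0; indeed the integrand is nonpositive almost everywhere. -/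
open MeasureTheory Real Filter
open scoped ENNReal Topology RealInnerProductSpace

noncomputable section

/-- Pointwise key inequality: for `s > 0`, `r ≥ 0`, `log (r/s) * (s - r) ≤ 0`. -/
lemma log_ratio_mul_nonpos {r s : ℝ} (hs : 0 < s) (hr : 0 ≤ r) :
    Real.log (r / s) * (s - r) ≤ 0 := by
  rcases le_total r s with h | h
  · exact mul_nonpos_of_nonpos_of_nonneg
      (Real.log_nonpos (div_nonneg hr hs.le) ((div_le_one hs).mpr h)) (by linarith)
  · exact mul_nonpos_of_nonneg_of_nonpos
      (Real.log_nonneg ((one_le_div hs).mpr h)) (by linarith)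

/-- key inequality in the verification of hypothesis (H'3):
if `f·g_{a₁}(⟪a₁,·⟫) = g·f_{a₁}(⟪a₁,·⟫)` a.e., then for every nonzero `c` the integrand
`log((g·f_c)/(g_c·f)) · (f_{a₁}/g_{a₁} − f_c/g_c) · g` is nonpositive a.e., and its
integral is `≤ 0`. -/
theorem statement15 (d : ℕ) (hd : 1 ≤ d) (f g : Euc d → ℝ)
    (hfm : Measurable f) (hgm : Measurable g)
    (hfpos : ∀ x, 0 < f x) (hgpos : ∀ x, 0 < g x)
    (hfint : ∫ x, f x = 1) (hgint : ∫ x, g x = 1)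
    (a₁ : Euc d) (ha₁ : a₁ ≠ 0)
    (fa1 ga1 : ℝ → ℝ) (hfa1m : Measurable fa1) (hga1m : Measurable ga1)
    (hfa1nn : ∀ t, 0 ≤ fa1 t) (hga1nn : ∀ t, 0 ≤ ga1 t)
    (hfa1 : IsMarg f a₁ fa1) (hga1 : IsMarg g a₁ ga1)
    (hcond : ∀ᵐ x ∂(MeasureTheory.volume : Measure (Euc d)),
      f x * ga1 ⟪a₁, x⟫ = g x * fa1 ⟪a₁, x⟫) :
    ∀ c : Euc d, c ≠ 0 →
    ∀ fc gc : ℝ → ℝ, Measurable fc → Measurable gc →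
      (∀ t, 0 ≤ fc t) → (∀ t, 0 ≤ gc t) →
      IsMarg f c fc → IsMarg g c gc →
      (∀ᵐ x ∂(MeasureTheory.volume : Measure (Euc d)),
          Real.log ((g x * fc ⟪c, x⟫) / (gc ⟪c, x⟫ * f x)) *
            (fa1 ⟪a₁, x⟫ / ga1 ⟪a₁, x⟫ - fc ⟪c, x⟫ / gc ⟪c, x⟫) * g x ≤ 0) ∧
      (∫ x, Real.log ((g x * fc ⟪c, x⟫) / (gc ⟪c, x⟫ * f x)) *
            (fa1 ⟪a₁, x⟫ / ga1 ⟪a₁, x⟫ - fc ⟪c, x⟫ / gc ⟪c, x⟫) * g x) ≤ 0 := by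
  intro c hc fc gc hfcm hgcm hfcnn hgcnn hfc hgc
  -- volume ≪ densMeasure g
  have hac : (volume : Measure (Euc d)) ≪ densMeasure g := by
    apply withDensity_absolutelyContinuous' (hgm.ennreal_ofReal).aemeasurable
    exact Eventually.of_forall fun x => (ENNReal.ofReal_pos.mpr (hgpos x)).ne'
  have hproj : Measurable fun x : Euc d => (⟪a₁, x⟫ : ℝ) :=
    (continuous_const.inner continuous_id).measurable
  -- ga1 ∘ proj ≠ 0 a.e.
  have hga1ne : ∀ᵐ x ∂(volume : Measure (Euc d)), ga1 ⟪a₁, x⟫ ≠ 0 := by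
    have hTm : MeasurableSet {t : ℝ | ga1 t = 0} := hga1m (measurableSet_singleton 0)
    have h1 : densMeasure ga1 {t : ℝ | ga1 t = 0} = 0 := by
      rw [densMeasure, withDensity_apply _ hTm]
      have : ∀ᵐ t ∂((volume : Measure ℝ).restrict {t : ℝ | ga1 t = 0}),
          ENNReal.ofReal (ga1 t) = 0 := by
        filter_upwards [ae_restrict_mem hTm] with t ht
        exact ENNReal.ofReal_eq_zero.mpr (le_of_eq ht)
      rw [lintegral_congr_ae this]
      simp
    have h2 : densMeasure g ((fun x : Euc d => (⟪a₁, x⟫ : ℝ)) ⁻¹' {t | ga1 t = 0}) = 0 := by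
      rw [← hga1] at h1
      rwa [Measure.map_apply hproj hTm] at h1
    have h3 : (volume : Measure (Euc d))
        ((fun x : Euc d => (⟪a₁, x⟫ : ℝ)) ⁻¹' {t | ga1 t = 0}) = 0 := hac h2
    rw [ae_iff]
    simpa [Set.preimage, Set.mem_setOf_eq] using h3
  -- a.e. pointwise inequality
  have hae : ∀ᵐ x ∂(volume : Measure (Euc d)),
      Real.log ((g x * fc ⟪c, x⟫) / (gc ⟪c, x⟫ * f x)) *
        (fa1 ⟪a₁, x⟫ / ga1 ⟪a₁, x⟫ - fc ⟪c, x⟫ / gc ⟪c, x⟫) * g x ≤ 0 := by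
    filter_upwards [hcond, hga1ne] with x hcx hgx
    have hfx := hfpos x
    have hgx' := hgpos x
    -- fa1 / ga1 = f / g
    have hga1pos : 0 < ga1 ⟪a₁, x⟫ := (hga1nn _).lt_of_ne (Ne.symm hgx)
    have hratio : fa1 ⟪a₁, x⟫ / ga1 ⟪a₁, x⟫ = f x / g x := by
      rw [div_eq_div_iff hga1pos.ne' hgx'.ne']
      linarith
    have hrw : (g x * fc ⟪c, x⟫) / (gc ⟪c, x⟫ * f x)
        = (fc ⟪c, x⟫ / gc ⟪c, x⟫) / (f x / g x) := by
      rcases eq_or_ne (gc ⟪c, x⟫) 0 with h | h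
      · rw [h, zero_mul, div_zero, div_zero, zero_div]
      · field_simp
    rw [hratio, hrw]
    exact mul_nonpos_of_nonpos_of_nonneg
      (log_ratio_mul_nonpos (div_pos hfx hgx') (div_nonneg (hfcnn _) (hgcnn _)))
      hgx'.le
  refine ⟨hae, integral_nonpos_of_ae hae⟩
end
end
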